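/- (Blow-up of the empirical log-likelihood at the boundary of its domain) Suppose X_1, …, X_n affinely span ℝ^d. If (θ_k) is a sequence in Θ_n converging to a point b ∈ ℝ^d with b ∉ Θ_n, then R(θ_k) → 0 as k → ∞; equivalently, l(θ_k) → +∞. -/

import Mathlib

noncomputable section

/-- The set of empirical likelihood weight vectors for `θ`:
`W(θ) = {w : wᵢ ≥ 0, Σ wᵢ = 1, Σ wᵢ Xᵢ = θ}`. -/
def Wset (n d : ℕ) (X : Fin n → EuclideanSpace ℝ (Fin d))
    (θ : EuclideanSpace ℝ (Fin d)) : Set (Fin n → ℝ) :=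
  {w | (∀ i, 0 ≤ w i) ∧ ∑ i, w i = 1 ∧ ∑ i, w i • X i = θ}

/-- The empirical likelihood ratio `R(θ) = sup {∏ n·wᵢ : w ∈ W(θ)}` (the sup over
the empty set is `0`, since `Real.sSup ∅ = 0`). -/
def elR (n d : ℕ) (X : Fin n → EuclideanSpace ℝ (Fin d))
    (θ : EuclideanSpace ℝ (Fin d)) : ℝ :=
  sSup ((fun w => ∏ i, (n : ℝ) * w i) '' Wset n d X θ)

/-- The empirical log-likelihood ratio `l(θ) = -2 log R(θ)`. -/
def elln (n d : ℕ) (X : Fin n → EuclideanSpace ℝ (Fin d))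
    (θ : EuclideanSpace ℝ (Fin d)) : ℝ :=
  -2 * Real.log (elR n d X θ)

/-- The sample mean `θ̃ = n⁻¹ Σ Xᵢ`. -/
def sampleMean (n d : ℕ) (X : Fin n → EuclideanSpace ℝ (Fin d)) :
    EuclideanSpace ℝ (Fin d) :=
  (n : ℝ)⁻¹ • ∑ i, X i

/-- The composite similarity mapping `h(θ) = θ̃ + (1 + l(θ)/(2n))(θ - θ̃)`. -/
def csm (n d : ℕ) (X : Fin n → EuclideanSpace ℝ (Fin d))
    (θ : EuclideanSpace ℝ (Fin d)) : EuclideanSpace ℝ (Fin d) :=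
  sampleMean n d X + (1 + elln n d X θ / (2 * n)) • (θ - sampleMean n d X)

/-!
Since `b` lies outside the interior of the hull `K` of the sample, a continuous linear
functional `f` separates it: `f < f b` on the interior of `K`, hence `f ≤ f b` on `K`, and some
sample point `X j` has `f (X j) < f b`. For weights `w ∈ W(θ)`, the identity
`f b - f θ = ∑ wᵢ (f b - f Xᵢ)` with nonnegative terms forces
`w_j ≤ (f b - f θ) / (f b - f (X j))`, while `∏ n wᵢ ≤ nⁿ w_j`. Hence
`R(θₖ) ≤ nⁿ (f b - f θₖ) / (f b - f (X j)) → 0`; as `R > 0` on the interior, `l(θₖ) → +∞`.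
-/

open Filter Finset Topology

theorem Convex.exists_dual_le_of_notMem_interior {E : Type*} [TopologicalSpace E]
    [AddCommGroup E] [Module ℝ E] [IsTopologicalAddGroup E] [ContinuousSMul ℝ E] {s : Set E}
    (hs : Convex ℝ s) (hs' : (interior s).Nonempty) {b : E} (hb : b ∉ interior s) :
    ∃ f : StrongDual ℝ E, (∀ x ∈ s, f x ≤ f b) ∧ ∀ x ∈ interior s, f x < f b := by
  obtain ⟨f, hf⟩ := geometric_hahn_banach_open_point hs.interior isOpen_interior hb
  refine ⟨f, fun x hx => ?_, hf⟩
  have hcl : closure (interior s) ⊆ {y | f y ≤ f b} :=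
    closure_minimal (fun y hy => (hf y hy).le) (isClosed_le f.continuous continuous_const)
  rw [hs.closure_interior_eq_closure_of_nonempty_interior hs'] at hcl
  exact hcl (subset_closure hx)

section Simplex

variable {ι E : Type*} [Fintype ι] [AddCommGroup E] [Module ℝ E]

theorem convexHull_range_eq_image_stdSimplex (X : ι → E) :
    convexHull ℝ (Set.range X) = (fun w => ∑ i, w i • X i) '' stdSimplex ℝ ι := by
  classical
  have hX : Set.range X = Fintype.linearCombination ℝ X '' Set.range fun i => Pi.single i 1 := by
    rw [← Set.range_comp]
    exact congrArg Set.range (funext fun i =>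
      (Fintype.linearCombination_apply_single ℝ X i 1).trans (one_smul ℝ _)).symm
  rw [hX, ← LinearMap.image_convexHull, convexHull_rangle_single_eq_stdSimplex]
  rfl

theorem prod_le_of_mem_stdSimplex {w : ι → ℝ} (hw : w ∈ stdSimplex ℝ ι) (j : ι) :
    ∏ i, w i ≤ w j := by
  classical
  rw [← mul_prod_erase _ _ (mem_univ j)]
  exact mul_le_of_le_one_right (hw.1 j)
    (prod_le_one (fun i _ => hw.1 i) fun i _ => (mem_Icc_of_mem_stdSimplex hw i).2)

end Simplex

section EmpiricalLikelihood

variable {n d : ℕ} {X : Fin n → EuclideanSpace ℝ (Fin d)} {θ : EuclideanSpace ℝ (Fin d)}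

theorem pos_of_mem_interior_convexHull_range
    (hθ : θ ∈ interior (convexHull ℝ (Set.range X))) : 0 < n := by
  rcases Nat.eq_zero_or_pos n with rfl | hn
  · simp [Set.range_eq_empty] at hθ
  · exact hn

theorem nonempty_Wset_iff : (Wset n d X θ).Nonempty ↔ θ ∈ convexHull ℝ (Set.range X) := by
  rw [convexHull_range_eq_image_stdSimplex]
  exact ⟨fun ⟨w, hw0, hw1, hθ⟩ => ⟨w, ⟨hw0, hw1⟩, hθ⟩, fun ⟨w, ⟨hw0, hw1⟩, hθ⟩ => ⟨w, hw0, hw1, hθ⟩⟩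

theorem smul_add_smul_mem_Wset {x y : EuclideanSpace ℝ (Fin d)} {v w : Fin n → ℝ}
    (hv : v ∈ Wset n d X x) (hw : w ∈ Wset n d X y) {a b : ℝ} (ha : 0 ≤ a) (hb : 0 ≤ b)
    (hab : a + b = 1) : a • v + b • w ∈ Wset n d X (a • x + b • y) := by
  refine ⟨fun i => ?_, ?_, ?_⟩
  · simp only [Pi.add_apply, Pi.smul_apply, smul_eq_mul]
    exact add_nonneg (mul_nonneg ha (hv.1 i)) (mul_nonneg hb (hw.1 i))
  · simp only [Pi.add_apply, Pi.smul_apply, smul_eq_mul, sum_add_distrib, ← mul_sum, hv.2.1,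
      hw.2.1, mul_one, hab]
  · simp only [Pi.add_apply, Pi.smul_apply, smul_eq_mul, add_smul, mul_smul, sum_add_distrib,
      ← smul_sum, hv.2.2, hw.2.2]

theorem const_mem_Wset_sampleMean (hn : n ≠ 0) :
    (fun _ => (n : ℝ)⁻¹) ∈ Wset n d X (sampleMean n d X) := by
  refine ⟨fun _ => by positivity, ?_, by simp [sampleMean, smul_sum]⟩
  simp [hn]

theorem exists_pos_mem_Wset_of_mem_interior
    (hθ : θ ∈ interior (convexHull ℝ (Set.range X))) : ∃ w ∈ Wset n d X θ, ∀ i, 0 < w i := by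
  have hn := pos_of_mem_interior_convexHull_range hθ
  set m := sampleMean n d X
  -- `θ` is a proper convex combination of a hull point beyond it (away from `m`) and of `m`,
  -- whose uniform weights are positive
  have hpush : Tendsto (fun ε : ℝ => θ + ε • (θ - m)) (𝓝[>] 0) (𝓝 θ) := by
    have hc : Continuous fun ε : ℝ => θ + ε • (θ - m) := by fun_prop
    simpa using (hc.tendsto 0).mono_left nhdsWithin_le_nhds
  obtain ⟨ε, hy, hε⟩ := ((hpush.eventually (mem_interior_iff_mem_nhds.1 hθ)).and
    self_mem_nhdsWithin).exists
  obtain ⟨v, hv⟩ := nonempty_Wset_iff.2 hy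
  have hε1 : 0 < 1 + ε := add_pos one_pos hε
  refine ⟨(1 + ε)⁻¹ • v + (ε / (1 + ε)) • fun _ => (n : ℝ)⁻¹, ?_, fun i => ?_⟩
  · convert smul_add_smul_mem_Wset (a := (1 + ε)⁻¹) (b := ε / (1 + ε)) hv
      (const_mem_Wset_sampleMean hn.ne') (by positivity) (by positivity) (by field_simp) using 2
    match_scalars
    · field_simp
    · field_simp
      ring
  · have hm : 0 < ε / (1 + ε) * (n : ℝ)⁻¹ := mul_pos (div_pos hε hε1) (by positivity)
    simp only [Pi.add_apply, Pi.smul_apply, smul_eq_mul]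
    exact add_pos_of_nonneg_of_pos (mul_nonneg (by positivity) (hv.1 i)) hm

theorem elR_nonneg : 0 ≤ elR n d X θ :=
  Real.sSup_nonneg (by
    rintro _ ⟨w, hw, rfl⟩
    exact prod_nonneg fun i _ => mul_nonneg (Nat.cast_nonneg n) (hw.1 i))

theorem prod_mul_le_of_mem_Wset {w : Fin n → ℝ} (hw : w ∈ Wset n d X θ) (j : Fin n) :
    ∏ i, (n : ℝ) * w i ≤ (n : ℝ) ^ n * w j := by
  rw [prod_mul_distrib, prod_const, card_univ, Fintype.card_fin]
  exact mul_le_mul_of_nonneg_left (prod_le_of_mem_stdSimplex ⟨hw.1, hw.2.1⟩ j) (by positivity)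

theorem elR_pos_of_mem_interior (hθ : θ ∈ interior (convexHull ℝ (Set.range X))) :
    0 < elR n d X θ := by
  obtain ⟨w, hw, hpos⟩ := exists_pos_mem_Wset_of_mem_interior hθ
  have hbdd : BddAbove ((fun w => ∏ i, (n : ℝ) * w i) '' Wset n d X θ) := by
    refine ⟨(n : ℝ) ^ n, ?_⟩
    rintro _ ⟨v, hv, rfl⟩
    calc ∏ i, (n : ℝ) * v i ≤ ∏ _i : Fin n, (n : ℝ) :=
          prod_le_prod (fun i _ => mul_nonneg (Nat.cast_nonneg n) (hv.1 i)) fun i _ =>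
            mul_le_of_le_one_right (Nat.cast_nonneg n)
              (mem_Icc_of_mem_stdSimplex ⟨hv.1, hv.2.1⟩ i).2
      _ = (n : ℝ) ^ n := by simp
  have hn : (0 : ℝ) < n := Nat.cast_pos.2 (pos_of_mem_interior_convexHull_range hθ)
  exact (prod_pos fun i _ => mul_pos hn (hpos i)).trans_le (le_csSup hbdd ⟨w, hw, rfl⟩)

theorem mul_sub_le_of_mem_Wset (f : EuclideanSpace ℝ (Fin d) →ₗ[ℝ] ℝ) {c : ℝ}
    (hX : ∀ i, f (X i) ≤ c) {w : Fin n → ℝ} (hw : w ∈ Wset n d X θ) (j : Fin n) :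
    w j * (c - f (X j)) ≤ c - f θ := by
  have hsum : c - f θ = ∑ i, w i * (c - f (X i)) := by
    simp only [← hw.2.2, map_sum, map_smul, smul_eq_mul, mul_sub, sum_sub_distrib, ← sum_mul,
      hw.2.1, one_mul]
  rw [hsum]
  exact single_le_sum (fun i _ => mul_nonneg (hw.1 i) (sub_nonneg.2 (hX i))) (mem_univ j)

theorem elR_le_of_apply_le (f : EuclideanSpace ℝ (Fin d) →ₗ[ℝ] ℝ) {c : ℝ}
    (hX : ∀ i, f (X i) ≤ c) {j : Fin n} (hj : f (X j) < c) (hθ : f θ ≤ c) :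
    elR n d X θ ≤ (n : ℝ) ^ n * ((c - f θ) / (c - f (X j))) := by
  have hδ : 0 < c - f (X j) := sub_pos.2 hj
  refine Real.sSup_le ?_ (mul_nonneg (by positivity) (div_nonneg (sub_nonneg.2 hθ) hδ.le))
  rintro _ ⟨w, hw, rfl⟩
  calc ∏ i, (n : ℝ) * w i ≤ (n : ℝ) ^ n * w j := prod_mul_le_of_mem_Wset hw j
    _ ≤ _ := mul_le_mul_of_nonneg_left ((le_div_iff₀ hδ).2 (mul_sub_le_of_mem_Wset f hX hw j))
        (by positivity)

end EmpiricalLikelihood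

theorem stmt16_general (n d : ℕ)
    (X : Fin n → EuclideanSpace ℝ (Fin d))
    (θ : ℕ → EuclideanSpace ℝ (Fin d))
    (hmem : ∀ k, θ k ∈ interior (convexHull ℝ (Set.range X)))
    (b : EuclideanSpace ℝ (Fin d))
    (hb : b ∉ interior (convexHull ℝ (Set.range X)))
    (hlim : Filter.Tendsto θ Filter.atTop (nhds b)) :
    Filter.Tendsto (fun k => elR n d X (θ k)) Filter.atTop (nhds 0) ∧
      Filter.Tendsto (fun k => elln n d X (θ k)) Filter.atTop Filter.atTop := by
  obtain ⟨f, hf_le, hf_lt⟩ :=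
    (convex_convexHull ℝ (Set.range X)).exists_dual_le_of_notMem_interior ⟨θ 0, hmem 0⟩ hb
  obtain ⟨_, ⟨j, rfl⟩, hj⟩ := (f.toLinearMap.concaveOn convex_univ).exists_le_of_mem_convexHull
    (Set.subset_univ _) (interior_subset (hmem 0))
  have hXj : f (X j) < f b := hj.trans_lt (hf_lt _ (hmem 0))
  have hbound : ∀ k, elR n d X (θ k) ≤ (n : ℝ) ^ n * ((f b - f (θ k)) / (f b - f (X j))) :=
    fun k => elR_le_of_apply_le f.toLinearMap (fun i => hf_le _ (subset_convexHull ℝ _ ⟨i, rfl⟩))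
      hXj (hf_le _ (interior_subset (hmem k)))
  have hR : Tendsto (fun k => elR n d X (θ k)) atTop (𝓝 0) := by
    refine squeeze_zero (fun _ => elR_nonneg) hbound ?_
    have hfθ : Tendsto (fun k => f (θ k)) atTop (𝓝 (f b)) := (f.continuous.tendsto b).comp hlim
    simpa using (((tendsto_const_nhds (x := f b)).sub hfθ).div_const (f b - f (X j))).const_mul
      ((n : ℝ) ^ n)
  have hR' : Tendsto (fun k => elR n d X (θ k)) atTop (𝓝[>] 0) :=
    tendsto_nhdsWithin_iff.2 ⟨hR, .of_forall fun k => elR_pos_of_mem_interior (hmem k)⟩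
  exact ⟨hR, (tendsto_const_mul_atTop_of_neg (by norm_num)).2
    (Real.tendsto_log_nhdsGT_zero.comp hR')⟩

/-- blow-up at the boundary: If `(θₖ) ⊆ Θₙ` converges to a point
`b ∉ Θₙ`, then `R(θₖ) → 0`, equivalently `l(θₖ) → +∞`. -/
theorem stmt16 (n d : ℕ) (hn : 0 < n) (hd : 0 < d)
    (X : Fin n → EuclideanSpace ℝ (Fin d))
    (hspan : (interior (convexHull ℝ (Set.range X))).Nonempty)
    (θ : ℕ → EuclideanSpace ℝ (Fin d))
    (hmem : ∀ k, θ k ∈ interior (convexHull ℝ (Set.range X)))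
    (b : EuclideanSpace ℝ (Fin d))
    (hb : b ∉ interior (convexHull ℝ (Set.range X)))
    (hlim : Filter.Tendsto θ Filter.atTop (nhds b)) :
    Filter.Tendsto (fun k => elR n d X (θ k)) Filter.atTop (nhds 0) ∧
      Filter.Tendsto (fun k => elln n d X (θ k)) Filter.atTop Filter.atTop :=
  stmt16_general n d X θ hmem b hb hlim
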